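/- arXiv:1701.02862 — 4 statements merged into one kernel-verified Lean document; each statement's English description precedes it below -/
import Mathlib

section
/- Let A be a (not necessarily unital) associative ℂ-algebra and let M be a unital and non-degenerate left A-module. Let (l, r) be a multiplier of A, i.e. l, r : A → A are ℂ-linear maps with l(ab) = l(a)b, r(ab) = a·r(b) and r(a)b = a·l(b) for all a, b ∈ A. Then there exists a unique ℂ-linear map T : M → M such that T(a·m) = l(a)·m for all a ∈ A and m ∈ M. (This gives the unique extension of a unital non-degenerate A-module to a module over the multiplier algebra M(A) with 1 acting as the identity.) -/
/-- For a unital non-degenerate left module `M` over a non-unital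
ℂ-algebra `A` and a multiplier `(l, r)` of `A`, there is a unique linear map
`T : M → M` with `T (a • m) = l a • m`. -/
theorem stmt_1 {A M : Type*} [NonUnitalRing A] [Module ℂ A]
    [SMulCommClass ℂ A A] [IsScalarTower ℂ A A]
    [AddCommGroup M] [Module ℂ M]
    (act : A →ₗ[ℂ] M →ₗ[ℂ] M)
    (hassoc : ∀ (a b : A) (m : M), act (a * b) m = act a (act b m))
    (hunital : Submodule.span ℂ {x : M | ∃ (a : A) (m : M), act a m = x} = ⊤)
    (hnd : ∀ m : M, (∀ a : A, act a m = 0) → m = 0)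
    (l r : A →ₗ[ℂ] A)
    (hl : ∀ a b : A, l (a * b) = l a * b)
    (hr : ∀ a b : A, r (a * b) = a * r b)
    (hlr : ∀ a b : A, r a * b = a * l b) :
    ∃! T : M →ₗ[ℂ] M, ∀ (a : A) (m : M), T (act a m) = act (l a) m := by
  -- uniqueness of the implicit characterization
  have huniq : ∀ (m n n' : M), (∀ b, act b n = act (r b) m) →
      (∀ b, act b n' = act (r b) m) → n = n' := by
    intro m n n' h h'
    have h0 : ∀ b, act b (n - n') = 0 := by
      intro b; simp [map_sub, h b, h' b]
    have := hnd (n - n') h0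
    exact sub_eq_zero.mp this
  have hex : ∀ m : M, ∃ n : M, ∀ b, act b n = act (r b) m := by
    intro m
    have hm : m ∈ Submodule.span ℂ {x : M | ∃ (a : A) (m : M), act a m = x} := by
      rw [hunital]; exact Submodule.mem_top
    induction hm using Submodule.span_induction with
    | mem x hx =>
      obtain ⟨a, m', rfl⟩ := hx
      refine ⟨act (l a) m', fun b => ?_⟩
      rw [← hassoc, ← hlr, hassoc]
    | zero => exact ⟨0, fun b => by simp⟩
    | add x y _ _ hx hy =>
      obtain ⟨nx, hnx⟩ := hx
      obtain ⟨ny, hny⟩ := hy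
      exact ⟨nx + ny, fun b => by simp [hnx b, hny b]⟩
    | smul c x _ hx =>
      obtain ⟨n, hn⟩ := hx
      exact ⟨c • n, fun b => by simp [hn b]⟩
  classical
  set f : M → M := fun m => Classical.choose (hex m) with hf
  have hfspec : ∀ m b, act b (f m) = act (r b) m := fun m => Classical.choose_spec (hex m)
  have hadd : ∀ x y, f (x + y) = f x + f y := by
    intro x y
    refine huniq (x + y) _ _ (hfspec (x + y)) (fun b => ?_)
    simp [hfspec x b, hfspec y b]
  have hsmul : ∀ (c : ℂ) x, f (c • x) = c • f x := by
    intro c x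
    refine huniq (c • x) _ _ (hfspec (c • x)) (fun b => ?_)
    simp [hfspec x b]
  refine ⟨⟨⟨f, hadd⟩, hsmul⟩, ?_, ?_⟩
  · intro a m
    refine huniq (act a m) _ _ (hfspec (act a m)) (fun b => ?_)
    rw [← hassoc, ← hlr, hassoc]
  · intro T hT
    ext m
    have hm : m ∈ Submodule.span ℂ {x : M | ∃ (a : A) (m : M), act a m = x} := by
      rw [hunital]; exact Submodule.mem_top
    induction hm using Submodule.span_induction with
    | mem x hx =>
      obtain ⟨a, m', rfl⟩ := hx
      have : f (act a m') = act (l a) m' := by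
        refine huniq (act a m') _ _ (hfspec (act a m')) (fun b => ?_)
        rw [← hassoc, ← hlr, hassoc]
      simp [hT a m', this]
    | zero =>
      have hf0 : f 0 = 0 := huniq 0 _ _ (hfspec 0) (fun b => by simp)
      simp [hf0]
    | add x y _ _ hx hy => simp [map_add, hx, hy]
    | smul c x _ hx => simp [map_smul, hx]
end

section
/- Let G be a groupoid, X a set, and (D, α) an action of G on X that is true, i.e. whenever r : c ⟶ d and s : c' ⟶ d' are morphisms, x ∈ D(r) and α(r)(x) ∈ D(s), then d = c'. For a morphism p define γ(p) : (X → ℂ) → (X → ℂ) by γ(p)(f)(x) = f(α(p⁻¹)(x)) if x ∈ D(p⁻¹) and γ(p)(f)(x) = 0 otherwise. Then for all morphisms p : u ⟶ v and q : w ⟶ z with v ≠ w (so that p and q are not composable), the composite γ(q) ∘ γ(p) is the zero map. -/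
open CategoryTheory

open scoped Classical

/-- For a *true* action `(D, α)` of a groupoid `G` on a set `X`, if
`p : u ⟶ v` and `q : w ⟶ z` are not composable (`v ≠ w`), then `γ(q) ∘ γ(p) = 0`. -/
theorem stmt_4 {G : Type*} [Groupoid G] {X : Type*}
    (D : ∀ {u v : G}, (u ⟶ v) → Set X)
    (α : ∀ {u v : G}, (u ⟶ v) → X → X)
    (h1 : ∀ {u v w : G} (p : u ⟶ v) (q : v ⟶ w), D p ⊆ D (p ≫ q))
    (h2 : ∀ {u v w : G} (p : u ⟶ v) (q : v ⟶ w), ∀ x ∈ D p, α p x ∈ D q)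
    (h3 : ∀ {u v w : G} (p : u ⟶ v) (q : v ⟶ w), ∀ x ∈ D p, α q (α p x) = α (p ≫ q) x)
    (h4 : ∀ (u : G), ∀ x ∈ D (𝟙 u), α (𝟙 u) x = x)
    (htrue : ∀ {c d c' d' : G} (r : c ⟶ d) (s : c' ⟶ d'), ∀ x ∈ D r, α r x ∈ D s → d = c')
    (γ : ∀ {u v : G}, (u ⟶ v) → (X → ℂ) → (X → ℂ))
    (hγ : ∀ {u v : G} (p : u ⟶ v) (f : X → ℂ) (x : X),
      γ p f x = if x ∈ D (Groupoid.inv p) then f (α (Groupoid.inv p) x) else 0) :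
    ∀ {u v w z : G} (p : u ⟶ v) (q : w ⟶ z), v ≠ w → γ q ∘ γ p = fun _ _ => (0 : ℂ) := by
  intro u v w z p q hvw
  funext f x
  simp only [Function.comp_apply]
  rw [hγ]
  split_ifs with hx
  · rw [hγ]
    split_ifs with hx2
    · exact absurd (htrue (Groupoid.inv q) (Groupoid.inv p) x hx hx2).symm hvw
    · rfl
  · rfl
end

section
/- Let A and B be bialgebras over ℂ with a bialgebra pairing ⟨·,·⟩ : A × B → ℂ, and let R be a left A-module algebra with smash product R # A. Then the formula b · (r ⊗ a) = Σ r ⊗ a₍₁₎ ⟨a₍₂₎, b⟩ makes R # A a left B-module algebra: (bb') · x = b · (b' · x), 1_B · x = x, b · (xy) = Σ (b₍₁₎ · x)(b₍₂₎ · y), and b · (1_R ⊗ 1_A) = ε_B(b)(1_R ⊗ 1_A), for all b, b' ∈ B and x, y ∈ R ⊗ A, where xy denotes the smash product multiplication. -/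
/-!
Write `f ⇀ a = Σ a₍₁₎ f(a₍₂₎)` for the hit action of a functional `f` on a coalgebra. The action
of `b` on `R # A` is `id_R ⊗ (⟨·, b⟩ ⇀ ·)`, so every claim is a property of `⇀`:
`⟨·, b⟩ ⇀ ⟨·, b'⟩ ⇀ a = ⟨·, b b'⟩ ⇀ a` and `⟨·, 1⟩ ⇀ a = a` by the pairing axioms on `B`,
`⟨·, b⟩ ⇀ 1 = ε(b) 1`, and `⟨·, b⟩ ⇀ a a' = Σ (⟨·, b₍₁₎⟩ ⇀ a) (⟨·, b₍₂₎⟩ ⇀ a')` by multiplicativity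
of `Δ_A` and the pairing axioms on `A`. Coassociativity makes `f ⇀ ·` a map of right
`A`-comodules, `Δ (f ⇀ a) = Σ a₍₁₎ ⊗ (f ⇀ a₍₂₎)`, and this is exactly what lets it pass through
the `a₍₁₎ ▷ s` factor of the smash product.
-/

open TensorProduct
open Coalgebra (comul counit)

section Coalgebra

variable {K A : Type*} [CommSemiring K] [AddCommMonoid A] [Module K A] [Coalgebra K A]

noncomputable def leftHit (f : A →ₗ[K] K) : A →ₗ[K] A :=
  (TensorProduct.rid K A).toLinearMap ∘ₗ f.lTensor A ∘ₗ comul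

lemma Coalgebra.Repr.leftHit_apply {a : A} {ι : Type*} (𝓡 : Coalgebra.Repr K a ι)
    (f : A →ₗ[K] K) : leftHit f a = ∑ i ∈ 𝓡.index, f (𝓡.right i) • 𝓡.left i := by
  simp [leftHit, ← 𝓡.eq]

@[simp]
lemma leftHit_counit : leftHit (counit : A →ₗ[K] K) = LinearMap.id := by
  ext a
  simp [leftHit]

lemma comul_comp_leftHit (f : A →ₗ[K] K) :
    comul ∘ₗ leftHit f = (leftHit f).lTensor A ∘ₗ comul := by
  have hcomul : comul ∘ₗ (TensorProduct.rid K A).toLinearMap ∘ₗ f.lTensor A =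
      (TensorProduct.rid K (A ⊗[K] A)).toLinearMap ∘ₗ f.lTensor (A ⊗[K] A) ∘ₗ
        comul.rTensor A := by
    ext x y
    simp
  have hassoc : (TensorProduct.rid K (A ⊗[K] A)).toLinearMap ∘ₗ f.lTensor (A ⊗[K] A) =
      ((TensorProduct.rid K A).toLinearMap ∘ₗ f.lTensor A).lTensor A ∘ₗ
        (TensorProduct.assoc K A A A).toLinearMap := by
    ext x y z
    simp
  ext a
  have hcomul_a := congr($hcomul (comul a))
  have hassoc_a := congr($hassoc (comul.rTensor A (comul a)))
  simp only [LinearMap.comp_apply, LinearEquiv.coe_coe, Coalgebra.coassoc_apply]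
    at hcomul_a hassoc_a
  simp only [leftHit, LinearMap.comp_apply, LinearEquiv.coe_coe, hcomul_a, hassoc_a,
    LinearMap.lTensor_comp]

lemma comp_leftHit (f g : A →ₗ[K] K) :
    f ∘ₗ leftHit g = LinearMap.mul' K K ∘ₗ TensorProduct.map f g ∘ₗ comul := by
  ext a
  simp [(Coalgebra.Repr.arbitrary K a).leftHit_apply, ← (Coalgebra.Repr.arbitrary K a).eq,
    mul_comm]

lemma leftHit_comp_leftHit (f g : A →ₗ[K] K) :
    leftHit f ∘ₗ leftHit g = leftHit (LinearMap.mul' K K ∘ₗ TensorProduct.map f g ∘ₗ comul) := by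
  calc leftHit f ∘ₗ leftHit g
      = (TensorProduct.rid K A).toLinearMap ∘ₗ f.lTensor A ∘ₗ (comul ∘ₗ leftHit g) := rfl
    _ = leftHit (f ∘ₗ leftHit g) := by
      rw [comul_comp_leftHit]
      simp only [leftHit, LinearMap.lTensor_comp, LinearMap.comp_assoc]
    _ = _ := by rw [comp_leftHit]

end Coalgebra

section Bialgebra

variable {K A : Type*} [CommSemiring K] [Semiring A] [Bialgebra K A]

lemma leftHit_one (f : A →ₗ[K] K) : leftHit f 1 = f 1 • 1 := by
  simp [leftHit, Algebra.TensorProduct.one_def]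

lemma leftHit_mul {ι : Type*} (f : A →ₗ[K] K) (S : Finset ι) (g₁ g₂ : ι → A →ₗ[K] K)
    (hf : ∀ a a', f (a * a') = ∑ i ∈ S, g₁ i a * g₂ i a') (a a' : A) :
    leftHit f (a * a') = ∑ i ∈ S, leftHit (g₁ i) a * leftHit (g₂ i) a' := by
  simp only [leftHit, LinearMap.comp_apply, Bialgebra.comul_mul,
    ← (Coalgebra.Repr.arbitrary K a).eq, ← (Coalgebra.Repr.arbitrary K a').eq, Finset.sum_mul,
    Finset.mul_sum, Algebra.TensorProduct.tmul_mul_tmul, map_sum, LinearMap.lTensor_tmul,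
    LinearEquiv.coe_coe, TensorProduct.rid_tmul, hf, Finset.sum_smul, smul_mul_smul]
  simp only [Finset.sum_comm (t := S)]

end Bialgebra

section SmashProduct

variable {K A R : Type*} [CommSemiring K] [Semiring A] [Algebra K A] [Coalgebra K A]
  [Semiring R] [Algebra K R]

lemma lTensor_smashMul {ι : Type*} (act : A →ₗ[K] R →ₗ[K] R)
    (mul : (R ⊗[K] A) →ₗ[K] (R ⊗[K] A) →ₗ[K] (R ⊗[K] A))
    (hmul : ∀ (r : R) (a : A) (s : R) (a' : A),
      mul (r ⊗ₜ[K] a) (s ⊗ₜ[K] a') =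
        TensorProduct.map ((LinearMap.mulLeft K r).comp (act.flip s))
          (LinearMap.mulRight K a') (comul (R := K) a))
    (φ : A →ₗ[K] A) (S : Finset ι) (ψ χ : ι → A →ₗ[K] A)
    (hψ : ∀ i, comul ∘ₗ ψ i = (ψ i).lTensor A ∘ₗ comul)
    (hφ : ∀ a a', φ (a * a') = ∑ i ∈ S, ψ i a * χ i a') (x y : R ⊗[K] A) :
    φ.lTensor R (mul x y) = ∑ i ∈ S, mul ((ψ i).lTensor R x) ((χ i).lTensor R y) := by
  induction x using TensorProduct.induction_on with
  | zero => simp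
  | add x x' hx hx' => simp only [map_add, LinearMap.add_apply, hx, hx', Finset.sum_add_distrib]
  | tmul r a =>
  induction y using TensorProduct.induction_on with
  | zero => simp
  | add y y' hy hy' => simp only [map_add, hy, hy', Finset.sum_add_distrib]
  | tmul s a' =>
  have hψa (i : ι) : comul (ψ i a) = (ψ i).lTensor A (comul a) := congr($(hψ i) a)
  simp only [LinearMap.lTensor_tmul, hmul, hψa, ← (Coalgebra.Repr.arbitrary K a).eq, map_sum,
    TensorProduct.map_tmul, LinearMap.mulRight_apply, hφ, tmul_sum]
  exact Finset.sum_comm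

end SmashProduct

theorem stmt_10_general {A B R : Type*} [Ring A] [Bialgebra ℂ A] [Ring B] [Bialgebra ℂ B]
    [Ring R] [Algebra ℂ R]
    (pair : A →ₗ[ℂ] B →ₗ[ℂ] ℂ)
    (hpair_mulA : ∀ (a a' : A) (b : B),
      pair (a * a') b =
        LinearMap.mul' ℂ ℂ
          (TensorProduct.map (pair a) (pair a') (Coalgebra.comul (R := ℂ) b)))
    (hpair_mulB : ∀ (a : A) (b b' : B),
      pair a (b * b') =
        LinearMap.mul' ℂ ℂ
          (TensorProduct.map (pair.flip b) (pair.flip b') (Coalgebra.comul (R := ℂ) a)))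
    (hpair_oneA : ∀ b : B, pair 1 b = Coalgebra.counit (R := ℂ) b)
    (hpair_oneB : ∀ a : A, pair a 1 = Coalgebra.counit (R := ℂ) a)
    (act : A →ₗ[ℂ] R →ₗ[ℂ] R)
    (mul : (R ⊗[ℂ] A) →ₗ[ℂ] (R ⊗[ℂ] A) →ₗ[ℂ] (R ⊗[ℂ] A))
    (hmul : ∀ (r : R) (a : A) (s : R) (a' : A),
      mul (r ⊗ₜ[ℂ] a) (s ⊗ₜ[ℂ] a') =
        TensorProduct.map ((LinearMap.mulLeft ℂ r).comp (act.flip s))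
          (LinearMap.mulRight ℂ a') (Coalgebra.comul (R := ℂ) a))
    (actB : B →ₗ[ℂ] (R ⊗[ℂ] A) →ₗ[ℂ] (R ⊗[ℂ] A))
    (hactB : ∀ (b : B) (r : R) (a : A),
      actB b (r ⊗ₜ[ℂ] a) =
        r ⊗ₜ[ℂ]
          ((TensorProduct.rid ℂ A)
            (TensorProduct.map LinearMap.id (pair.flip b) (Coalgebra.comul (R := ℂ) a)))) :
    (∀ (b b' : B) (x : R ⊗[ℂ] A), actB (b * b') x = actB b (actB b' x)) ∧
    (∀ x : R ⊗[ℂ] A, actB 1 x = x) ∧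
    (∀ (b : B) (x y : R ⊗[ℂ] A),
      actB b (mul x y) =
        TensorProduct.lift mul
          (TensorProduct.map (actB.flip x) (actB.flip y) (Coalgebra.comul (R := ℂ) b))) ∧
    (∀ b : B,
      actB b ((1 : R) ⊗ₜ[ℂ] (1 : A)) =
        Coalgebra.counit (R := ℂ) b • ((1 : R) ⊗ₜ[ℂ] (1 : A))) := by
  have actB_eq (b : B) : actB b = (leftHit (pair.flip b)).lTensor R := by
    ext r a
    exact hactB b r a
  have pair_flip_mul (b b' : B) : pair.flip (b * b') =
      LinearMap.mul' ℂ ℂ ∘ₗ TensorProduct.map (pair.flip b) (pair.flip b') ∘ₗ comul := by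
    ext a
    exact hpair_mulB a b b'
  have pair_flip_one : pair.flip (1 : B) = counit := by
    ext a
    exact hpair_oneB a
  refine ⟨fun b b' x => ?_, fun x => ?_, fun b x y => ?_, fun b => ?_⟩
  · rw [actB_eq, actB_eq, actB_eq, pair_flip_mul, ← leftHit_comp_leftHit, LinearMap.lTensor_comp]
    rfl
  · simp [actB_eq, pair_flip_one]
  · set 𝓡 := Coalgebra.Repr.arbitrary ℂ b
    have pair_mul (a a' : A) :
        pair (a * a') b = ∑ i ∈ 𝓡.index, pair a (𝓡.left i) * pair a' (𝓡.right i) := by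
      simp [hpair_mulA, ← 𝓡.eq]
    rw [← 𝓡.eq]
    simp only [map_sum, TensorProduct.map_tmul, TensorProduct.lift.tmul, LinearMap.flip_apply,
      actB_eq]
    exact lTensor_smashMul act mul hmul _ _ _ _ (fun i => comul_comp_leftHit _)
      (leftHit_mul _ _ _ _ pair_mul) x y
  · simp [actB_eq, leftHit_one, hpair_oneA]

/-- Given a bialgebra pairing of `A` and `B` and a left `A`-module algebra
`R`, the dual action `b · (r ⊗ a) = Σ r ⊗ a₍₁₎ ⟨a₍₂₎, b⟩` makes the smash product `R # A`
a left `B`-module algebra. -/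
theorem stmt_10 {A B R : Type*} [Ring A] [Bialgebra ℂ A] [Ring B] [Bialgebra ℂ B]
    [Ring R] [Algebra ℂ R]
    (pair : A →ₗ[ℂ] B →ₗ[ℂ] ℂ)
    (hpair_mulA : ∀ (a a' : A) (b : B),
      pair (a * a') b =
        LinearMap.mul' ℂ ℂ
          (TensorProduct.map (pair a) (pair a') (Coalgebra.comul (R := ℂ) b)))
    (hpair_mulB : ∀ (a : A) (b b' : B),
      pair a (b * b') =
        LinearMap.mul' ℂ ℂ
          (TensorProduct.map (pair.flip b) (pair.flip b') (Coalgebra.comul (R := ℂ) a)))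
    (hpair_oneA : ∀ b : B, pair 1 b = Coalgebra.counit (R := ℂ) b)
    (hpair_oneB : ∀ a : A, pair a 1 = Coalgebra.counit (R := ℂ) a)
    (act : A →ₗ[ℂ] R →ₗ[ℂ] R)
    (hact_one : ∀ r : R, act 1 r = r)
    (hact_mul : ∀ (a a' : A) (r : R), act (a * a') r = act a (act a' r))
    (hma_mul : ∀ (a : A) (r s : R),
      act a (r * s) =
        LinearMap.mul' ℂ R
          (TensorProduct.map (act.flip r) (act.flip s) (Coalgebra.comul (R := ℂ) a)))
    (hma_one : ∀ a : A, act a 1 = Coalgebra.counit (R := ℂ) a • (1 : R))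
    (mul : (R ⊗[ℂ] A) →ₗ[ℂ] (R ⊗[ℂ] A) →ₗ[ℂ] (R ⊗[ℂ] A))
    (hmul : ∀ (r : R) (a : A) (s : R) (a' : A),
      mul (r ⊗ₜ[ℂ] a) (s ⊗ₜ[ℂ] a') =
        TensorProduct.map ((LinearMap.mulLeft ℂ r).comp (act.flip s))
          (LinearMap.mulRight ℂ a') (Coalgebra.comul (R := ℂ) a))
    (actB : B →ₗ[ℂ] (R ⊗[ℂ] A) →ₗ[ℂ] (R ⊗[ℂ] A))
    (hactB : ∀ (b : B) (r : R) (a : A),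
      actB b (r ⊗ₜ[ℂ] a) =
        r ⊗ₜ[ℂ]
          ((TensorProduct.rid ℂ A)
            (TensorProduct.map LinearMap.id (pair.flip b) (Coalgebra.comul (R := ℂ) a)))) :
    (∀ (b b' : B) (x : R ⊗[ℂ] A), actB (b * b') x = actB b (actB b' x)) ∧
    (∀ x : R ⊗[ℂ] A, actB 1 x = x) ∧
    (∀ (b : B) (x y : R ⊗[ℂ] A),
      actB b (mul x y) =
        TensorProduct.lift mul
          (TensorProduct.map (actB.flip x) (actB.flip y) (Coalgebra.comul (R := ℂ) b))) ∧
    (∀ b : B,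
      actB b ((1 : R) ⊗ₜ[ℂ] (1 : A)) =
        Coalgebra.counit (R := ℂ) b • ((1 : R) ⊗ₜ[ℂ] (1 : A))) :=
  stmt_10_general pair hpair_mulA hpair_mulB hpair_oneA hpair_oneB act mul hmul actB hactB
end

section
/- Let A and B be Hopf algebras over ℂ with bijective antipodes S_A and S_B, and let ⟨·,·⟩ : A × B → ℂ be a bialgebra pairing compatible with the antipodes, i.e. ⟨S_A(a), b⟩ = ⟨a, S_B(b)⟩ for all a ∈ A, b ∈ B. Regard B as a left A-module algebra via a ▷ b = Σ b₍₁₎ ⟨a, b₍₂₎⟩ and A as a left B-module algebra via b ▷ a = Σ a₍₁₎ ⟨a₍₂₎, b⟩, and form the smash products B # A and A # B. Then the ℂ-linear bijection Φ : B ⊗ A → A ⊗ B defined by Φ(b ⊗ a) = S_A⁻¹(a) ⊗ S_B(b) is an anti-isomorphism: Φ(uv) = Φ(v)Φ(u) for all u, v ∈ B ⊗ A, where the products are the smash multiplications of B # A and A # B respectively. -/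
/-! Both `S_B` and `S_A⁻¹` reverse products and coproducts, so `Φ` carries each term
`b b'₍₁₎ ⊗ a₍₂₎ a' ⟨a₍₁₎, b'₍₂₎⟩` of the product in `B # A` to the corresponding term of the
product of the images in `A # B`, taken in the opposite order; the scalars agree because
`⟨S_A⁻¹ x, S_B y⟩ = ⟨x, y⟩`. -/

open TensorProduct Coalgebra HopfAlgebra WithConv
open Algebra.TensorProduct (includeLeft includeRight)

namespace Bialgebra
variable {R H : Type*} [CommSemiring R] [Semiring H] [Bialgebra R H]

lemma toConv_comul_eq_includeLeft_mul_includeRight :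
    toConv (comul : H →ₗ[R] H ⊗[R] H) =
      toConv (includeLeft : H →ₐ[R] H ⊗[R] H).toLinearMap *
        toConv (includeRight : H →ₐ[R] H ⊗[R] H).toLinearMap := by
  ext c
  simp [(ℛ R c).convMul_apply, ← (ℛ R c).eq]

end Bialgebra

namespace HopfAlgebra
variable {R H : Type*} [CommSemiring R] [Semiring H] [HopfAlgebra R H]

lemma toConv_algHom_comp_antipode_mul_algHom {B : Type*} [Semiring B] [Algebra R B]
    (g : H →ₐ[R] B) :
    toConv (g.toLinearMap ∘ₗ antipode R) * toConv g.toLinearMap = 1 := by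
  ext c
  simp [(ℛ R c).convMul_apply, ← map_mul, ← map_sum, sum_antipode_mul_eq_algebraMap_counit]

lemma toConv_map_antipode_comp_comm_comp_comul :
    toConv (map (antipode R) (antipode R) ∘ₗ (TensorProduct.comm R H H).toLinearMap ∘ₗ comul) =
      toConv ((includeRight : H →ₐ[R] H ⊗[R] H).toLinearMap ∘ₗ antipode R) *
        toConv ((includeLeft : H →ₐ[R] H ⊗[R] H).toLinearMap ∘ₗ antipode R) := by
  ext c
  simp [(ℛ R c).convMul_apply, ← (ℛ R c).eq]

/-- In the convolution algebra of maps `H → H ⊗ H`, `Δ ∘ S` is a right inverse of `Δ`, and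
`Δ = ι₁ * ι₂` exhibits `(S ⊗ S) ∘ τ ∘ Δ = (ι₂ ∘ S) * (ι₁ ∘ S)` as a left inverse. -/
theorem comul_comp_antipode :
    comul ∘ₗ antipode R =
      map (antipode R) (antipode R) ∘ₗ (TensorProduct.comm R H H).toLinearMap ∘ₗ comul := by
  refine toConv_injective (left_inv_eq_right_inv (M := WithConv (H →ₗ[R] H ⊗[R] H))
    (a := toConv comul) ?_ LinearMap.comul_right_inv).symm
  rw [toConv_map_antipode_comp_comm_comp_comul,
    Bialgebra.toConv_comul_eq_includeLeft_mul_includeRight]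
  simp only [mul_assoc]
  rw [← mul_assoc (toConv ((includeLeft : H →ₐ[R] H ⊗[R] H).toLinearMap ∘ₗ antipode R)),
    toConv_algHom_comp_antipode_mul_algHom, one_mul,
    toConv_algHom_comp_antipode_mul_algHom]

theorem comul_antipode (a : H) :
    comul (antipode R a) = map (antipode R) (antipode R) (TensorProduct.comm R H H (comul a)) :=
  LinearMap.congr_fun comul_comp_antipode a

section InverseAntipode

variable {T : H →ₗ[R] H}

theorem mul_antidistrib_of_inverse_antipode (hTS : Function.LeftInverse T (antipode R))
    (hST : Function.RightInverse T (antipode R)) (a b : H) : T (a * b) = T b * T a := by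
  rw [← hTS (T b * T a), antipode_mul_antidistrib, hST, hST]

theorem comul_of_inverse_antipode (hTS : Function.LeftInverse T (antipode R))
    (hST : Function.RightInverse T (antipode R)) (a : H) :
    comul (T a) = map T T (TensorProduct.comm R H H (comul a)) := by
  have hTS' : T ∘ₗ antipode R = LinearMap.id := LinearMap.ext hTS
  conv_rhs =>
    rw [← hST a, comul_antipode, ← map_comm, comm_comm, map_map, hTS', map_id, LinearMap.id_apply]

end InverseAntipode

end HopfAlgebra

namespace Coalgebra.Repr
variable {R H ι : Type*} [CommSemiring R] [Semiring H] [HopfAlgebra R H] {a : H}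

@[simps]
def antipode (r : Repr R a ι) : Repr R (HopfAlgebra.antipode R a) ι where
  index := r.index
  left := HopfAlgebra.antipode R ∘ r.right
  right := HopfAlgebra.antipode R ∘ r.left
  eq := by simp [HopfAlgebra.comul_antipode, ← r.eq, map_sum]

@[simps]
def ofInverseAntipode (r : Repr R a ι) {T : H →ₗ[R] H}
    (hTS : Function.LeftInverse T (HopfAlgebra.antipode R))
    (hST : Function.RightInverse T (HopfAlgebra.antipode R)) : Repr R (T a) ι where
  index := r.index
  left := T ∘ r.right
  right := T ∘ r.left
  eq := by simp [HopfAlgebra.comul_of_inverse_antipode hTS hST, ← r.eq, map_sum]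

end Coalgebra.Repr

theorem TensorProduct.bijective_of_apply_tmul_eq_swap_tmul {R M N P Q : Type*} [CommSemiring R]
    [AddCommMonoid M] [Module R M] [AddCommMonoid N] [Module R N] [AddCommMonoid P] [Module R P]
    [AddCommMonoid Q] [Module R Q] {Φ : N ⊗[R] M →ₗ[R] P ⊗[R] Q} {f : M →ₗ[R] P}
    {g : N →ₗ[R] Q} (hf : Function.Bijective f) (hg : Function.Bijective g)
    (hΦ : ∀ n m, Φ (n ⊗ₜ m) = f m ⊗ₜ g n) : Function.Bijective Φ := by
  have hΦe : Φ = (TensorProduct.comm R N M ≪≫ₗ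
      congr (.ofBijective f hf) (.ofBijective g hg)).toLinearMap :=
    ext' fun n m => by simp [hΦ]
  exact hΦe ▸ LinearEquiv.bijective _

section SmashProduct

variable {R K C M ι : Type*} [CommSemiring R]

theorem pairingAction_eq_sum [AddCommMonoid K] [Module R K] [AddCommMonoid C] [Module R C]
    [Coalgebra R C] {pair : K →ₗ[R] C →ₗ[R] R} {act : K →ₗ[R] C →ₗ[R] C}
    (hact : ∀ k c, act k c = TensorProduct.rid R C (map LinearMap.id (pair k) (comul c)))
    (k : K) {c : C} (r : Repr R c ι) :
    act k c = ∑ i ∈ r.index, pair k (r.right i) • r.left i := by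
  simp [hact, ← r.eq, map_sum]

theorem smashMul_tmul_eq_sum [Semiring M] [Algebra R M] [Semiring K] [Algebra R K]
    [Coalgebra R K] {act : K →ₗ[R] M →ₗ[R] M} {mul : M ⊗[R] K →ₗ[R] M ⊗[R] K →ₗ[R] M ⊗[R] K}
    (hmul : ∀ m k m' k', mul (m ⊗ₜ k) (m' ⊗ₜ k') =
      map (LinearMap.mulLeft R m ∘ₗ act.flip m') (LinearMap.mulRight R k') (comul k))
    (m m' : M) {k : K} (k' : K) (r : Repr R k ι) :
    mul (m ⊗ₜ k) (m' ⊗ₜ k') = ∑ i ∈ r.index, (m * act (r.left i) m') ⊗ₜ (r.right i * k') := by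
  simp [hmul, ← r.eq, map_sum]

end SmashProduct

theorem stmt_14_general {A B : Type*} [Ring A] [HopfAlgebra ℂ A] [Ring B] [HopfAlgebra ℂ B]
    (SA' : A →ₗ[ℂ] A)
    (hSA'l : ∀ a : A, SA' (HopfAlgebra.antipode (R := ℂ) a) = a)
    (hSA'r : ∀ a : A, HopfAlgebra.antipode (R := ℂ) (SA' a) = a)
    (SB' : B →ₗ[ℂ] B)
    (hSB'l : ∀ b : B, SB' (HopfAlgebra.antipode (R := ℂ) b) = b)
    (hSB'r : ∀ b : B, HopfAlgebra.antipode (R := ℂ) (SB' b) = b)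
    (pair : A →ₗ[ℂ] B →ₗ[ℂ] ℂ)
    (hpair_antipode : ∀ (a : A) (b : B),
      pair (HopfAlgebra.antipode (R := ℂ) a) b = pair a (HopfAlgebra.antipode (R := ℂ) b))
    (actAB : A →ₗ[ℂ] B →ₗ[ℂ] B)
    (hactAB : ∀ (a : A) (b : B),
      actAB a b =
        (TensorProduct.rid ℂ B)
          (TensorProduct.map LinearMap.id (pair a) (Coalgebra.comul (R := ℂ) b)))
    (actBA : B →ₗ[ℂ] A →ₗ[ℂ] A)
    (hactBA : ∀ (b : B) (a : A),
      actBA b a =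
        (TensorProduct.rid ℂ A)
          (TensorProduct.map LinearMap.id (pair.flip b) (Coalgebra.comul (R := ℂ) a)))
    (mulBA : (B ⊗[ℂ] A) →ₗ[ℂ] (B ⊗[ℂ] A) →ₗ[ℂ] (B ⊗[ℂ] A))
    (hmulBA : ∀ (b : B) (a : A) (b' : B) (a' : A),
      mulBA (b ⊗ₜ[ℂ] a) (b' ⊗ₜ[ℂ] a') =
        TensorProduct.map ((LinearMap.mulLeft ℂ b).comp (actAB.flip b'))
          (LinearMap.mulRight ℂ a') (Coalgebra.comul (R := ℂ) a))
    (mulAB : (A ⊗[ℂ] B) →ₗ[ℂ] (A ⊗[ℂ] B) →ₗ[ℂ] (A ⊗[ℂ] B))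
    (hmulAB : ∀ (a : A) (b : B) (a' : A) (b' : B),
      mulAB (a ⊗ₜ[ℂ] b) (a' ⊗ₜ[ℂ] b') =
        TensorProduct.map ((LinearMap.mulLeft ℂ a).comp (actBA.flip a'))
          (LinearMap.mulRight ℂ b') (Coalgebra.comul (R := ℂ) b))
    (Φ : (B ⊗[ℂ] A) →ₗ[ℂ] (A ⊗[ℂ] B))
    (hΦ : ∀ (b : B) (a : A),
      Φ (b ⊗ₜ[ℂ] a) = SA' a ⊗ₜ[ℂ] HopfAlgebra.antipode (R := ℂ) b) :
    Function.Bijective Φ ∧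
      ∀ u v : B ⊗[ℂ] A, Φ (mulBA u v) = mulAB (Φ v) (Φ u) := by
  refine ⟨?_, ?_⟩
  · exact bijective_of_apply_tmul_eq_swap_tmul
      (Function.bijective_iff_has_inverse.mpr ⟨antipode ℂ, hSA'r, hSA'l⟩)
      (Function.bijective_iff_has_inverse.mpr ⟨SB', hSB'l, hSB'r⟩) hΦ
  · have hpair : ∀ x y, pair (SA' x) (antipode ℂ y) = pair x y := fun x y => by
      rw [← hpair_antipode, hSA'r]
    have hΦ_mul_tmul : ∀ b a b' a',
        Φ (mulBA (b ⊗ₜ a) (b' ⊗ₜ a')) = mulAB (Φ (b' ⊗ₜ a')) (Φ (b ⊗ₜ a)) := by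
      intro b a b' a'
      let ra := ℛ ℂ a
      let rb := ℛ ℂ b'
      rw [hΦ, hΦ, smashMul_tmul_eq_sum hmulBA b b' a' ra,
        smashMul_tmul_eq_sum hmulAB _ _ _ rb.antipode]
      simp only [pairingAction_eq_sum hactAB _ rb,
        pairingAction_eq_sum hactBA _ (ra.ofInverseAntipode hSA'l hSA'r)]
      simp only [Finset.mul_sum, Algebra.mul_smul_comm, sum_tmul, ← smul_tmul', map_sum, map_smul,
        hΦ, mul_antidistrib_of_inverse_antipode hSA'l hSA'r, antipode_mul_antidistrib,
        Repr.antipode_index, Repr.ofInverseAntipode_index, Repr.antipode_left, Function.comp_apply,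
        Repr.ofInverseAntipode_right, LinearMap.flip_apply, hpair, Repr.ofInverseAntipode_left,
        Repr.antipode_right]
      exact Finset.sum_comm
    have hbilin : mulBA.compr₂ Φ = (mulAB.compl₁₂ Φ Φ).flip :=
      TensorProduct.ext' fun b a => TensorProduct.ext' fun b' a' => hΦ_mul_tmul b a b' a'
    exact fun u v => LinearMap.congr_fun₂ hbilin u v

/-- For Hopf algebras `A`, `B` with bijective antipodes and an
antipode-compatible bialgebra pairing, the map `Φ(b ⊗ a) = S_A⁻¹(a) ⊗ S_B(b)` is a
bijective anti-isomorphism from the smash product `B # A` to the smash product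
`A # B`. -/
theorem stmt_14 {A B : Type*} [Ring A] [HopfAlgebra ℂ A] [Ring B] [HopfAlgebra ℂ B]
    (SA' : A →ₗ[ℂ] A)
    (hSA'l : ∀ a : A, SA' (HopfAlgebra.antipode (R := ℂ) a) = a)
    (hSA'r : ∀ a : A, HopfAlgebra.antipode (R := ℂ) (SA' a) = a)
    (SB' : B →ₗ[ℂ] B)
    (hSB'l : ∀ b : B, SB' (HopfAlgebra.antipode (R := ℂ) b) = b)
    (hSB'r : ∀ b : B, HopfAlgebra.antipode (R := ℂ) (SB' b) = b)
    (pair : A →ₗ[ℂ] B →ₗ[ℂ] ℂ)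
    (hpair_mulA : ∀ (a a' : A) (b : B),
      pair (a * a') b =
        LinearMap.mul' ℂ ℂ
          (TensorProduct.map (pair a) (pair a') (Coalgebra.comul (R := ℂ) b)))
    (hpair_mulB : ∀ (a : A) (b b' : B),
      pair a (b * b') =
        LinearMap.mul' ℂ ℂ
          (TensorProduct.map (pair.flip b) (pair.flip b') (Coalgebra.comul (R := ℂ) a)))
    (hpair_oneA : ∀ b : B, pair 1 b = Coalgebra.counit (R := ℂ) b)
    (hpair_oneB : ∀ a : A, pair a 1 = Coalgebra.counit (R := ℂ) a)
    (hpair_antipode : ∀ (a : A) (b : B),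
      pair (HopfAlgebra.antipode (R := ℂ) a) b = pair a (HopfAlgebra.antipode (R := ℂ) b))
    (actAB : A →ₗ[ℂ] B →ₗ[ℂ] B)
    (hactAB : ∀ (a : A) (b : B),
      actAB a b =
        (TensorProduct.rid ℂ B)
          (TensorProduct.map LinearMap.id (pair a) (Coalgebra.comul (R := ℂ) b)))
    (actBA : B →ₗ[ℂ] A →ₗ[ℂ] A)
    (hactBA : ∀ (b : B) (a : A),
      actBA b a =
        (TensorProduct.rid ℂ A)
          (TensorProduct.map LinearMap.id (pair.flip b) (Coalgebra.comul (R := ℂ) a)))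
    (mulBA : (B ⊗[ℂ] A) →ₗ[ℂ] (B ⊗[ℂ] A) →ₗ[ℂ] (B ⊗[ℂ] A))
    (hmulBA : ∀ (b : B) (a : A) (b' : B) (a' : A),
      mulBA (b ⊗ₜ[ℂ] a) (b' ⊗ₜ[ℂ] a') =
        TensorProduct.map ((LinearMap.mulLeft ℂ b).comp (actAB.flip b'))
          (LinearMap.mulRight ℂ a') (Coalgebra.comul (R := ℂ) a))
    (mulAB : (A ⊗[ℂ] B) →ₗ[ℂ] (A ⊗[ℂ] B) →ₗ[ℂ] (A ⊗[ℂ] B))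
    (hmulAB : ∀ (a : A) (b : B) (a' : A) (b' : B),
      mulAB (a ⊗ₜ[ℂ] b) (a' ⊗ₜ[ℂ] b') =
        TensorProduct.map ((LinearMap.mulLeft ℂ a).comp (actBA.flip a'))
          (LinearMap.mulRight ℂ b') (Coalgebra.comul (R := ℂ) b))
    (Φ : (B ⊗[ℂ] A) →ₗ[ℂ] (A ⊗[ℂ] B))
    (hΦ : ∀ (b : B) (a : A),
      Φ (b ⊗ₜ[ℂ] a) = SA' a ⊗ₜ[ℂ] HopfAlgebra.antipode (R := ℂ) b) :
    Function.Bijective Φ ∧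
      ∀ u v : B ⊗[ℂ] A, Φ (mulBA u v) = mulAB (Φ v) (Φ u) :=
  stmt_14_general SA' hSA'l hSA'r SB' hSB'l hSB'r pair hpair_antipode actAB hactAB actBA hactBA
    mulBA hmulBA mulAB hmulAB Φ hΦ
end
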